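/- Let V ⊆ ℝ^n be a regular space with capacity c. In the Ford–Fulkerson method that always augments maximally along a shortest augmenting r-path (by 1-norm), starting from the zero flow, the total number of augmentations before no augmenting path exists is at most n². -/

import Mathlib

/-!
Shortest augmenting paths never get shorter. If `P` is a shortest augmenting `r`-path for `f`
and `Q` is augmenting after maximal augmentation along `P`, the conformal primitive
decomposition of `P + Q` has exactly two `r`-path summands `M`, `J`; both augment `f`, and
`‖M‖₁ + ‖J‖₁ ≤ ‖P‖₁ + ‖Q‖₁`, whence `‖P‖₁ ≤ ‖Q‖₁`. In the equality case `M + J = P + Q` and `P`,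
`Q` do not cancel, so a coordinate saturated by `P` is avoided by every augmenting path of the
same length for the rest of that phase. Each step is therefore determined by the pair (length of
its path, a coordinate it saturates), which leaves at most `n · n` steps.

Regularity enters through the decomposition: by Cramer's rule and total unimodularity, the
nonzero entries of an elementary vector of `ker A` all have the same absolute value, so every
integral vector of `V` is a conformal sum of primitive vectors.
-/

open Finset

variable {n : ℕ}

/-- The support of a vector. -/
def supp (x : Fin n → ℝ) : Set (Fin n) := {j | x j ≠ 0}

/-- A nonzero vector of `V` is elementary if no nonzero vector of `V` has support
properly contained in its support. -/
def IsElementary (V : Submodule ℝ (Fin n → ℝ)) (x : Fin n → ℝ) : Prop :=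
  x ∈ V ∧ x ≠ 0 ∧ ∀ y ∈ V, y ≠ 0 → ¬ (supp y ⊂ supp x)

/-- A primitive vector: elementary with entries in `{-1, 0, 1}`. -/
def IsPrimitive (V : Submodule ℝ (Fin n → ℝ)) (x : Fin n → ℝ) : Prop :=
  IsElementary V x ∧ ∀ j, x j ∈ ({-1, 0, 1} : Set ℝ)

/-- `y` conforms to `x`. -/
def Conforms (y x : Fin n → ℝ) : Prop := ∀ j, y j ≠ 0 → y j * x j > 0

/-- A regular space: the kernel of a totally unimodular matrix. -/
def IsRegularSpace (V : Submodule ℝ (Fin n → ℝ)) : Prop :=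
  ∃ (m : ℕ) (A : Matrix (Fin m) (Fin n) ℝ),
    A.IsTotallyUnimodular ∧ V = LinearMap.ker A.mulVecLin

/-- An `r`-path: a primitive vector with value `+1` at `r`. -/
def IsRPath (V : Submodule ℝ (Fin n → ℝ)) (r : Fin n) (P : Fin n → ℝ) : Prop :=
  IsPrimitive V P ∧ P r = 1

/-- Feasibility with respect to capacity `c` (no constraint at `r`). -/
def Feasible (c : Fin n → ℝ) (r : Fin n) (f : Fin n → ℝ) : Prop :=
  ∀ j, j ≠ r → 0 ≤ f j ∧ f j ≤ c j

/-- An `r`-path `P` is augmenting for the flow `f`. -/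
def Augmenting (V : Submodule ℝ (Fin n → ℝ)) (c : Fin n → ℝ) (r : Fin n)
    (f P : Fin n → ℝ) : Prop :=
  IsRPath V r P ∧ ∃ ε : ℝ, 0 < ε ∧ Feasible c r (f + ε • P)

/-- The 1-norm. -/
def onorm (x : Fin n → ℝ) : ℝ := ∑ j, |x j|

/-- A shortest augmenting `r`-path. -/
def ShortestAug (V : Submodule ℝ (Fin n → ℝ)) (c : Fin n → ℝ) (r : Fin n)
    (f P : Fin n → ℝ) : Prop :=
  Augmenting V c r f P ∧ ∀ Q, Augmenting V c r f Q → onorm P ≤ onorm Q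

/-- `g` is obtained from `f` by maximal augmentation along `P`. -/
def MaxAug (c : Fin n → ℝ) (r : Fin n) (f P g : Fin n → ℝ) : Prop :=
  ∃ ε : ℝ, 0 < ε ∧ g = f + ε • P ∧ Feasible c r g ∧
    ∀ ε' : ℝ, ε < ε' → ¬ Feasible c r (f + ε' • P)

/-- A conformal primitive decomposition of `P + Q` in which `M` and `J` are the two
`r`-path summands (`M` playing the role of `P ∧ Q` and `J` of `P ∨ Q`). -/
def MeetJoinDecomp (V : Submodule ℝ (Fin n → ℝ)) (r : Fin n)
    (P Q M J : Fin n → ℝ) : Prop :=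
  ∃ (k : ℕ) (p : Fin k → Fin n → ℝ) (a b : Fin k),
    (∀ i, IsPrimitive V (p i)) ∧ (∀ i, Conforms (p i) (P + Q)) ∧
    (∑ i, p i) = P + Q ∧ a ≠ b ∧ p a = M ∧ p b = J ∧
    p a r = 1 ∧ p b r = 1 ∧ ∀ i, p i r = 1 → i = a ∨ i = b

open Matrix Filter Topology

lemma supp_neg (x : Fin n → ℝ) : supp (-x) = supp x := by
  ext; simp [supp]

lemma supp_smul {a : ℝ} (ha : a ≠ 0) (x : Fin n → ℝ) : supp (a • x) = supp x := by
  ext; simp [supp, ha]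

lemma Conforms.refl (x : Fin n → ℝ) : Conforms x x := fun _ hj => mul_self_pos.2 hj

lemma Conforms.trans {x y z : Fin n → ℝ} (hxy : Conforms x y) (hyz : Conforms y z) :
    Conforms x z := by
  intro j hj
  have hxyj := hxy j hj
  have hyzj := hyz j (right_ne_zero_of_mul hxyj.ne')
  nlinarith [mul_pos hxyj hyzj, sq_nonneg (y j)]

lemma Conforms.supp_subset {x y : Fin n → ℝ} (h : Conforms x y) : supp x ⊆ supp y :=
  fun j hj => right_ne_zero_of_mul (h j hj).ne'

lemma Conforms.smul_left {x y : Fin n → ℝ} {a : ℝ} (ha : 0 < a) (h : Conforms x y) :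
    Conforms (a • x) y := fun j hj => by
  simpa [mul_assoc] using mul_pos ha (h j (right_ne_zero_of_mul hj))

lemma onorm_nonneg (x : Fin n → ℝ) : 0 ≤ onorm x :=
  sum_nonneg fun j _ => abs_nonneg (x j)

lemma onorm_eq_zero {x : Fin n → ℝ} : onorm x = 0 ↔ x = 0 := by
  simp [onorm, sum_eq_zero_iff_of_nonneg, funext_iff]

lemma onorm_add_le (x y : Fin n → ℝ) : onorm (x + y) ≤ onorm x + onorm y := by
  rw [onorm, onorm, onorm, ← sum_add_distrib]
  exact sum_le_sum fun j _ => abs_add_le (x j) (y j)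

lemma abs_add_eq_of_onorm_add_eq {x y : Fin n → ℝ} (h : onorm (x + y) = onorm x + onorm y)
    (j : Fin n) : |x j + y j| = |x j| + |y j| := by
  simp only [onorm, Pi.add_apply, ← sum_add_distrib] at h
  rw [sum_eq_sum_iff_of_le fun j _ => abs_add_le (x j) (y j)] at h
  exact h j (mem_univ j)

lemma onorm_eq_card {x : Fin n → ℝ} (hx : ∀ j, x j ∈ ({-1, 0, 1} : Set ℝ)) :
    onorm x = #{j | x j ≠ 0} := by
  rw [onorm, ← sum_boole]
  refine sum_congr rfl fun j _ => ?_
  rcases hx j with h | h | h <;> simp_all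

lemma sum_abs_eq_abs_sum_of_mul_pos {k : ℕ} (a : Fin k → ℝ) {s : ℝ}
    (h : ∀ i, a i ≠ 0 → 0 < a i * s) : ∑ i, |a i| = |∑ i, a i| := by
  rcases le_total 0 s with hs | hs
  · have hpos : ∀ i, 0 ≤ a i := fun i => by
      by_contra! hi
      nlinarith [h i hi.ne]
    rw [abs_sum_of_nonneg fun i _ => hpos i]
    exact sum_congr rfl fun i _ => abs_of_nonneg (hpos i)
  · have hneg : ∀ i, 0 ≤ -a i := fun i => by
      by_contra! hi
      nlinarith [h i (neg_lt_zero.1 hi).ne']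
    rw [← abs_neg, ← sum_neg_distrib, abs_sum_of_nonneg fun i _ => hneg i]
    exact sum_congr rfl fun i _ => abs_of_nonpos (neg_nonneg.1 (hneg i))

lemma onorm_sum_of_conforms {k : ℕ} {p : Fin k → Fin n → ℝ} {x : Fin n → ℝ}
    (hp : ∀ i, Conforms (p i) x) (hsum : ∑ i, p i = x) : ∑ i, onorm (p i) = onorm x := by
  simp only [onorm]
  rw [sum_comm]
  refine sum_congr rfl fun j _ => ?_
  rw [sum_abs_eq_abs_sum_of_mul_pos (fun i => p i j) fun i hi => hp i j hi, ← hsum,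
    Finset.sum_apply]

/-- Walk from `y` along `-z` until the first coordinate of `y` vanishes. -/
lemma exists_conforms_supp_ssubset_of_pos {V : Submodule ℝ (Fin n → ℝ)} {y z : Fin n → ℝ}
    (hyV : y ∈ V) (hzV : z ∈ V) (hzy : supp z ⊂ supp y) (hpos : ∃ j, 0 < z j * y j) :
    ∃ y' ∈ V, y' ≠ 0 ∧ Conforms y' y ∧ supp y' ⊂ supp y := by
  classical
  obtain ⟨j₀, hj₀⟩ := hpos
  obtain ⟨j', hj'T, hmin⟩ := (univ.filter fun j => 0 < z j * y j).exists_min_image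
    (fun j => y j / z j) ⟨j₀, by simpa using hj₀⟩
  simp only [mem_filter, mem_univ, true_and] at hj'T hmin
  set t := y j' / z j'
  have hz' : z j' ≠ 0 := left_ne_zero_of_mul hj'T.ne'
  have ht : 0 < t := by
    rw [show t = z j' * y j' / (z j' * z j') from (mul_div_mul_left _ _ hz').symm]
    exact div_pos hj'T (mul_self_pos.2 hz')
  have hconf : Conforms (y - t • z) y := by
    intro j hj
    have hyj : y j ≠ 0 := by
      intro hyj
      have hzj : z j = 0 := by_contra fun h => hzy.1 h hyj
      simp [hyj, hzj] at hj
    have hval : (y - t • z) j * y j = y j * y j - t * (z j * y j) := by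
      simp only [Pi.sub_apply, Pi.smul_apply, smul_eq_mul]; ring
    rcases le_or_gt (z j * y j) 0 with hle | hlt
    · nlinarith [mul_self_pos.2 hyj]
    · have hzj : z j ≠ 0 := left_ne_zero_of_mul hlt.ne'
      have : t * (z j * y j) ≤ y j * y j := by
        calc t * (z j * y j) ≤ y j / z j * (z j * y j) := by gcongr; exact hmin j hlt
          _ = y j * y j := by field_simp
      exact lt_of_le_of_ne (by linarith) (Ne.symm (mul_ne_zero hj hyj))
  have hkill : (y - t • z) j' = 0 := by
    simp only [Pi.sub_apply, Pi.smul_apply, smul_eq_mul, t]; field_simp; ring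
  obtain ⟨j₁, hj₁y, hj₁z⟩ := Set.exists_of_ssubset hzy
  refine ⟨y - t • z, sub_mem hyV (V.smul_mem t hzV), fun h => hj₁y ?_, hconf,
    (Set.ssubset_iff_of_subset hconf.supp_subset).2
      ⟨j', right_ne_zero_of_mul hj'T.ne', fun h => h hkill⟩⟩
  simpa [not_not.1 hj₁z] using congrFun h j₁

lemma exists_isElementary_conforms {V : Submodule ℝ (Fin n → ℝ)} {x : Fin n → ℝ}
    (hxV : x ∈ V) (hx : x ≠ 0) : ∃ y, IsElementary V y ∧ Conforms y x := by
  induction hk : (supp x).ncard using Nat.strong_induction_on generalizing x with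
  | _ k ih =>
  by_cases hel : IsElementary V x
  · exact ⟨x, hel, Conforms.refl x⟩
  obtain ⟨z, hzV, hz, hzx⟩ : ∃ z ∈ V, z ≠ 0 ∧ supp z ⊂ supp x := by
    simpa [IsElementary, hxV, hx] using hel
  obtain ⟨j, hj⟩ := Function.ne_iff.1 hz
  obtain ⟨x', hx'V, hx', hx'x, hx'supp⟩ :
      ∃ x' ∈ V, x' ≠ 0 ∧ Conforms x' x ∧ supp x' ⊂ supp x := by
    rcases (mul_ne_zero hj (hzx.1 hj)).lt_or_gt with hneg | hpos
    · exact exists_conforms_supp_ssubset_of_pos hxV (neg_mem hzV) (by rwa [supp_neg])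
        ⟨j, by simpa using hneg⟩
    · exact exists_conforms_supp_ssubset_of_pos hxV hzV hzx ⟨j, hpos⟩
  obtain ⟨y, hy, hyx'⟩ := ih _ (hk ▸ Set.ncard_lt_ncard hx'supp) hx'V hx' rfl
  exact ⟨y, hy, hyx'.trans hx'x⟩

theorem Matrix.exists_submatrix_det_ne_zero {K m ι : Type*} [Field K] [Fintype m] [Fintype ι]
    [DecidableEq ι] (C : Matrix m ι K) (hC : LinearIndependent K C.col) :
    ∃ g : ι → m, (C.submatrix g id).det ≠ 0 := by
  have hrank : C.rank = Fintype.card ι := by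
    rw [← rank_transpose]
    exact LinearIndependent.rank_matrix (by simpa using hC)
  have hspan : Submodule.span K (Set.range C.row) = ⊤ := Submodule.eq_top_of_finrank_eq <| by
    rw [← rank_eq_finrank_span_row, hrank, Module.finrank_fintype_fun_eq_card]
  obtain ⟨κ, a, -, hsp, hli⟩ := exists_linearIndependent' K C.row
  let b : Module.Basis κ K (ι → K) := .mk hli (by rw [hsp, hspan])
  let e : κ ≃ ι := b.indexEquiv (Pi.basisFun K ι)
  refine ⟨a ∘ e.symm, ?_⟩
  rw [← isUnit_iff_ne_zero, ← isUnit_iff_isUnit_det, ← linearIndependent_rows_iff_isUnit]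
  exact hli.comp e.symm e.symm.injective

theorem Matrix.det_mul_apply_eq_det_updateCol {ι R : Type*} [Fintype ι] [DecidableEq ι]
    [CommRing R] (B : Matrix ι ι R) (x : ι → R) (k : ι) :
    B.det * x k = (B.updateCol k (B *ᵥ x)).det := by
  rw [← cramer_apply, cramer_eq_adjugate_mulVec, mulVec_mulVec, adjugate_mul, smul_mulVec,
    one_mulVec]
  rfl

theorem Matrix.mulVec_extend_val {m ι R : Type*} [Fintype ι] [NonUnitalNonAssocSemiring R]
    (A : Matrix m ι R) (p : ι → Prop) [DecidablePred p] (v : {i // p i} → R) :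
    A *ᵥ Function.extend Subtype.val v 0 = A.submatrix id Subtype.val *ᵥ v := by
  ext i
  simp only [mulVec, dotProduct]
  have hzero : ∀ k : {i // ¬ p i}, A i k * Function.extend Subtype.val v 0 k = 0 := fun k => by
    rw [Function.extend_apply' _ _ _ fun ⟨a, ha⟩ => k.2 (ha ▸ a.2), Pi.zero_apply, mul_zero]
  rw [← Fintype.sum_subtype_add_sum_subtype p, sum_eq_zero fun k _ => hzero k, add_zero]
  exact sum_congr rfl fun k _ => by rw [Subtype.val_injective.extend_apply]; rfl

lemma abs_le_one_of_mem_range_signType {x : ℝ}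
    (hx : x ∈ Set.range (SignType.cast : SignType → ℝ)) : |x| ≤ 1 := by
  obtain ⟨s, rfl⟩ := hx
  cases s <;> simp

lemma abs_eq_one_of_mem_range_signType {x : ℝ}
    (hx : x ∈ Set.range (SignType.cast : SignType → ℝ)) (h0 : x ≠ 0) : |x| = 1 := by
  obtain ⟨s, rfl⟩ := hx
  cases s <;> simp_all

lemma linearIndependent_col_of_isElementary_ker {m : ℕ} {A : Matrix (Fin m) (Fin n) ℝ}
    {y : Fin n → ℝ} (hy : IsElementary (LinearMap.ker A.mulVecLin) y) {j₀ : Fin n}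
    (h₀ : y j₀ ≠ 0) :
    LinearIndependent ℝ
      (A.submatrix id (Subtype.val : {j // y j ≠ 0 ∧ j ≠ j₀} → Fin n)).col := by
  classical
  rw [← mulVec_injective_iff, ← coe_mulVecLin, ← LinearMap.ker_eq_bot, LinearMap.ker_eq_bot']
  intro v hv
  set z := Function.extend Subtype.val v 0
  have hz_eq_zero : ∀ j, ¬ (y j ≠ 0 ∧ j ≠ j₀) → z j = 0 :=
    fun j hj => Function.extend_apply' _ _ _ fun ⟨a, ha⟩ => hj (ha ▸ a.2)
  have hz : z = 0 := by
    by_contra hz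
    refine hy.2.2 z ?_ hz <| (Set.ssubset_iff_of_subset fun j hj => ?_).2
      ⟨j₀, h₀, fun hj => hj (hz_eq_zero j₀ fun h => h.2 rfl)⟩
    · rw [LinearMap.mem_ker, mulVecLin_apply, mulVec_extend_val]
      exact hv
    · by_contra hyj
      exact hj (hz_eq_zero j fun h => hyj h.1)
  funext k
  rw [← Subtype.val_injective.extend_apply v 0 k]
  exact congrFun hz k

/-- Cramer's rule for the columns `supp y \ {j₀}`, completed by rows to an invertible minor `B`,
gives `det B * y j₁ = -y j₀ * det B'` for another square minor `B'` of `A`. -/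
theorem abs_le_of_isElementary_ker {m : ℕ} {A : Matrix (Fin m) (Fin n) ℝ}
    (hA : A.IsTotallyUnimodular) {y : Fin n → ℝ}
    (hy : IsElementary (LinearMap.ker A.mulVecLin) y)
    {j₀ j₁ : Fin n} (h₀ : y j₀ ≠ 0) (h₁ : y j₁ ≠ 0) : |y j₁| ≤ |y j₀| := by
  classical
  by_cases hj : j₁ = j₀
  · rw [hj]
  let ι := {j // y j ≠ 0 ∧ j ≠ j₀}
  have hA' := (A.isTotallyUnimodular_iff_fintype).1 hA ι
  obtain ⟨g, hg⟩ :=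
    (A.submatrix id Subtype.val).exists_submatrix_det_ne_zero
      (linearIndependent_col_of_isElementary_ker hy h₀)
  set B : Matrix ι ι ℝ := A.submatrix g Subtype.val
  have hsplit :
      Function.extend Subtype.val (fun k : ι => y k) 0 = y - Pi.single j₀ (y j₀) := by
    funext j
    by_cases hjS : y j ≠ 0 ∧ j ≠ j₀
    · rw [Subtype.val_injective.extend_apply (fun k : ι => y k) 0 ⟨j, hjS⟩]
      simp [hjS.2]
    · rw [Function.extend_apply' _ _ _ fun ⟨a, ha⟩ => hjS (ha ▸ a.2)]
      by_cases hjj : j = j₀ <;> simp_all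
  have hB : B *ᵥ (fun k => y k) = -y j₀ • fun l => A (g l) j₀ := by
    have hAy : A *ᵥ y = 0 := hy.1
    have := congrArg (A *ᵥ ·) hsplit
    simp only [mulVec_extend_val, mulVec_sub, hAy, mulVec_single] at this
    refine funext fun l => (congrFun this (g l)).trans ?_
    simp [mul_comm]
  set k₁ : ι := ⟨j₁, h₁, hj⟩
  set B' : Matrix ι ι ℝ := A.submatrix g (Function.update Subtype.val k₁ j₀)
  have hcramer : B.det * y j₁ = -y j₀ * B'.det := by
    calc B.det * y j₁ = B.det * (fun k : ι => y k) k₁ := rfl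
      _ = -y j₀ * B'.det := by
        rw [B.det_mul_apply_eq_det_updateCol (fun k : ι => y k) k₁, hB, det_updateCol_smul]
        congr 2
        ext l k
        by_cases hk : k = k₁ <;> simp [hk, B, B']
  calc |y j₁| = |B.det * y j₁| := by
        rw [abs_mul, abs_eq_one_of_mem_range_signType (hA' g Subtype.val) hg, one_mul]
    _ = |y j₀| * |B'.det| := by rw [hcramer, abs_mul, abs_neg]
    _ ≤ |y j₀| :=
      mul_le_of_le_one_right (abs_nonneg _) (abs_le_one_of_mem_range_signType (hA' _ _))

lemma IsRegularSpace.isPrimitive_inv_abs_smul {V : Submodule ℝ (Fin n → ℝ)}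
    (hV : IsRegularSpace V) {y : Fin n → ℝ} (hy : IsElementary V y) {j : Fin n}
    (hj : y j ≠ 0) :
    IsPrimitive V (|y j|⁻¹ • y) := by
  obtain ⟨m, A, hA, rfl⟩ := hV
  have ha : |y j|⁻¹ ≠ 0 := inv_ne_zero (abs_ne_zero.2 hj)
  refine ⟨⟨Submodule.smul_mem _ _ hy.1, smul_ne_zero ha hy.2.1, ?_⟩, fun k => ?_⟩
  · rw [supp_smul ha]
    exact hy.2.2
  by_cases hk : y k = 0
  · simp [hk]
  have habs : |y k| = |y j| :=
    le_antisymm (abs_le_of_isElementary_ker hA hy hj hk) (abs_le_of_isElementary_ker hA hy hk hj)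
  have : |(|y j|⁻¹ • y) k| = 1 := by
    rw [Pi.smul_apply, smul_eq_mul, abs_mul, abs_inv, abs_abs, habs,
      inv_mul_cancel₀ (abs_ne_zero.2 hj)]
  rcases abs_eq (zero_le_one' ℝ) |>.1 this with h | h <;> simp [h]

lemma IsRegularSpace.exists_isPrimitive_conforms {V : Submodule ℝ (Fin n → ℝ)}
    (hV : IsRegularSpace V) {x : Fin n → ℝ} (hxV : x ∈ V) (hx : x ≠ 0) :
    ∃ p, IsPrimitive V p ∧ Conforms p x := by
  obtain ⟨y, hy, hyx⟩ := exists_isElementary_conforms hxV hx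
  obtain ⟨j, hj⟩ := Function.ne_iff.1 hy.2.1
  exact ⟨_, hV.isPrimitive_inv_abs_smul hy hj, hyx.smul_left (inv_pos.2 (abs_pos.2 hj))⟩

lemma mem_range_intCast_of_mem {u : ℝ} (hu : u ∈ ({-1, 0, 1} : Set ℝ)) :
    u ∈ Set.range ((↑) : ℤ → ℝ) := by
  rcases hu with rfl | rfl | rfl
  exacts [⟨-1, by simp⟩, ⟨0, by simp⟩, ⟨1, by simp⟩]

lemma intCast_sub_of_conforms {a u : ℝ} (ha : a ∈ Set.range ((↑) : ℤ → ℝ))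
    (hu : u ∈ ({-1, 0, 1} : Set ℝ)) (hua : u ≠ 0 → 0 < u * a) :
    a - u ∈ Set.range ((↑) : ℤ → ℝ) ∧ |a - u| + |u| = |a| ∧
      (a - u ≠ 0 → 0 < (a - u) * a) := by
  obtain ⟨z, rfl⟩ := ha
  rcases hu with rfl | rfl | rfl
  · have hz : (z : ℝ) ≤ -1 := by
      have : z < 0 := by exact_mod_cast (by linarith [hua (by norm_num)] : (z : ℝ) < 0)
      exact_mod_cast (by omega : z ≤ -1)
    refine ⟨⟨z + 1, by push_cast; ring⟩, ?_, fun h => ?_⟩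
    · rw [abs_of_nonpos (by linarith), abs_of_neg (by linarith : (z : ℝ) < 0)]; norm_num
    · exact mul_pos_of_neg_of_neg (lt_of_le_of_ne (by linarith) h) (by linarith)
  · simp
  · have hz : (1 : ℝ) ≤ z := by
      have : 0 < z := by exact_mod_cast (by linarith [hua (by norm_num)] : (0 : ℝ) < z)
      exact_mod_cast (by omega : 1 ≤ z)
    refine ⟨⟨z - 1, by push_cast; ring⟩, ?_, fun h => ?_⟩
    · rw [abs_of_nonneg (by linarith), abs_of_pos (by linarith : (0 : ℝ) < z)]; norm_num
    · exact mul_pos (lt_of_le_of_ne (by linarith) (Ne.symm h)) (by linarith)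

lemma IsRegularSpace.exists_primitive_sum {V : Submodule ℝ (Fin n → ℝ)}
    (hV : IsRegularSpace V) {x : Fin n → ℝ} (hxV : x ∈ V)
    (hx : ∀ j, x j ∈ Set.range ((↑) : ℤ → ℝ)) :
    ∃ (k : ℕ) (p : Fin k → Fin n → ℝ),
      (∀ i, IsPrimitive V (p i)) ∧ (∀ i, Conforms (p i) x) ∧ ∑ i, p i = x := by
  induction hK : ⌈onorm x⌉₊ using Nat.strong_induction_on generalizing x with
  | _ K ih =>
  by_cases hx0 : x = 0
  · exact ⟨0, finZeroElim, finZeroElim, finZeroElim, by simp [hx0]⟩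
  obtain ⟨p, hp, hpx⟩ := hV.exists_isPrimitive_conforms hxV hx0
  have hcoord j := intCast_sub_of_conforms (hx j) (hp.2 j) (hpx j)
  have hnorm : onorm (x - p) + onorm p = onorm x := by
    simp only [onorm, ← sum_add_distrib, Pi.sub_apply, (hcoord _).2.1]
  have hp1 : 1 ≤ onorm p := by
    obtain ⟨j, hj⟩ := Function.ne_iff.1 hp.1.2.1
    rw [onorm_eq_card hp.2]
    exact_mod_cast card_pos.2 ⟨j, by simpa using hj⟩
  have hlt : ⌈onorm (x - p)⌉₊ < K := by
    have := Nat.ceil_mono (by linarith : onorm (x - p) + 1 ≤ onorm x)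
    rw [Nat.ceil_add_one (onorm_nonneg _)] at this
    omega
  obtain ⟨k, q, hq, hqx, hqsum⟩ := ih _ hlt (sub_mem hxV hp.1.1)
    (fun j => (hcoord j).1) rfl
  refine ⟨k + 1, Fin.cons p q, Fin.cases hp hq, Fin.cases hpx fun i => (hqx i).trans fun j hj =>
    (hcoord j).2.2 hj, by rw [Fin.sum_cons, hqsum, add_sub_cancel]⟩

lemma IsRegularSpace.exists_meetJoinDecomp {V : Submodule ℝ (Fin n → ℝ)}
    (hV : IsRegularSpace V) {r : Fin n} {P Q : Fin n → ℝ} (hP : IsRPath V r P)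
    (hQ : IsRPath V r Q) :
    ∃ M J, MeetJoinDecomp V r P Q M J := by
  classical
  have hint : ∀ j, (P + Q) j ∈ Set.range ((↑) : ℤ → ℝ) := fun j => by
    obtain ⟨a, ha⟩ := mem_range_intCast_of_mem (hP.1.2 j)
    obtain ⟨b, hb⟩ := mem_range_intCast_of_mem (hQ.1.2 j)
    exact ⟨a + b, by simp [ha, hb]⟩
  obtain ⟨k, p, hp, hpPQ, hsum⟩ := hV.exists_primitive_sum (add_mem hP.1.1.1 hQ.1.1.1) hint
  have hr : (P + Q) r = 2 := by norm_num [hP.2, hQ.2]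
  have hpr : ∀ i, p i r = if p i r = 1 then 1 else 0 := fun i => by
    obtain h | h | h : p i r = -1 ∨ p i r = 0 ∨ p i r = 1 := (hp i).2 r
    · have := hpPQ i r (by norm_num [h])
      norm_num [h, hr] at this
    all_goals norm_num [h]
  have hcard : #{i | p i r = 1} = 2 := by
    have := congrFun hsum r
    rw [Finset.sum_apply, hr, sum_congr rfl fun i _ => hpr i, sum_boole] at this
    exact_mod_cast this
  obtain ⟨a, b, hab, hset⟩ := card_eq_two.1 hcard
  have hmem : ∀ i, p i r = 1 ↔ i = a ∨ i = b := fun i => by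
    simpa using Finset.ext_iff.1 hset i
  exact ⟨p a, p b, k, p, a, b, hp, hpPQ, hsum, hab, rfl, rfl, (hmem a).2 (Or.inl rfl),
    (hmem b).2 (Or.inr rfl), fun i => (hmem i).1⟩

lemma MeetJoinDecomp.onorm_add_le_onorm_add {V : Submodule ℝ (Fin n → ℝ)} {r : Fin n}
    {P Q M J : Fin n → ℝ} (h : MeetJoinDecomp V r P Q M J) :
    onorm M + onorm J ≤ onorm P + onorm Q := by
  classical
  obtain ⟨k, p, a, b, -, hconf, hsum, hab, rfl, rfl, -⟩ := h
  have := sum_compl_add_sum {a, b} fun i => onorm (p i)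
  rw [sum_pair hab, onorm_sum_of_conforms hconf hsum] at this
  linarith [sum_nonneg fun i (_ : i ∈ ({a, b}ᶜ : Finset _)) => onorm_nonneg (p i),
    onorm_add_le P Q]

lemma MeetJoinDecomp.add_eq {V : Submodule ℝ (Fin n → ℝ)} {r : Fin n}
    {P Q M J : Fin n → ℝ} (h : MeetJoinDecomp V r P Q M J)
    (hle : onorm P + onorm Q ≤ onorm M + onorm J) :
    M + J = P + Q ∧ onorm (P + Q) = onorm P + onorm Q := by
  classical
  obtain ⟨k, p, a, b, -, hconf, hsum, hab, rfl, rfl, -⟩ := h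
  have := sum_compl_add_sum {a, b} fun i => onorm (p i)
  rw [sum_pair hab, onorm_sum_of_conforms hconf hsum] at this
  have hnonneg : ∀ i ∈ ({a, b}ᶜ : Finset _), 0 ≤ onorm (p i) :=
    fun i _ => onorm_nonneg (p i)
  have hrest : ∑ i ∈ {a, b}ᶜ, onorm (p i) = 0 := by
    linarith [sum_nonneg hnonneg, onorm_add_le P Q]
  refine ⟨?_, by linarith [sum_nonneg hnonneg, onorm_add_le P Q]⟩
  rw [← hsum, ← sum_compl_add_sum {a, b}, sum_pair hab,
    sum_eq_zero fun i hi =>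
      onorm_eq_zero.1 ((sum_eq_zero_iff_of_nonneg hnonneg).1 hrest i hi), zero_add]

lemma eventually_nonneg_add_mul {x b : ℝ} (hx : 0 ≤ x) (hb : x = 0 → 0 ≤ b) :
    ∀ᶠ t in 𝓝[>] (0 : ℝ), 0 ≤ x + t * b := by
  rcases hx.eq_or_lt with rfl | hx
  · filter_upwards [self_mem_nhdsWithin] with t ht
    simpa using mul_nonneg (le_of_lt ht) (hb rfl)
  · have : Tendsto (fun t : ℝ => x + t * b) (𝓝 0) (𝓝 x) :=
      (by fun_prop : Continuous fun t : ℝ => x + t * b).tendsto' 0 x (by simp)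
    exact nhdsWithin_le_nhds ((this.eventually (lt_mem_nhds hx)).mono fun t ht => ht.le)

def Saturates (c : Fin n → ℝ) (r : Fin n) (P G : Fin n → ℝ) (j : Fin n) : Prop :=
  j ≠ r ∧ ((0 < P j ∧ G j = c j) ∨ (P j < 0 ∧ G j = 0))

lemma Saturates.ne_zero {c : Fin n → ℝ} {r : Fin n} {P G : Fin n → ℝ} {j : Fin n}
    (h : Saturates c r P G j) : P j ≠ 0 := by
  rcases h.2 with ⟨h, -⟩ | ⟨h, -⟩
  exacts [h.ne', h.ne]

lemma MaxAug.feasible {c : Fin n → ℝ} {r : Fin n} {F P G : Fin n → ℝ}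
    (h : MaxAug c r F P G) : Feasible c r G := by
  obtain ⟨ε, -, -, hG, -⟩ := h
  exact hG

lemma MaxAug.exists_saturates {c : Fin n → ℝ} {r : Fin n} {F P G : Fin n → ℝ}
    (h : MaxAug c r F P G) : ∃ j, Saturates c r P G j := by
  obtain ⟨ε, hε, rfl, hG, hmax⟩ := h
  by_contra! hns
  simp only [Saturates, not_and, not_or] at hns
  have hev : ∀ j, ∀ᶠ t in 𝓝[>] (0 : ℝ), j ≠ r →
      0 ≤ (F + ε • P) j + t * P j ∧ 0 ≤ (c j - (F + ε • P) j) + t * -P j := by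
    intro j
    by_cases hj : j = r
    · exact Eventually.of_forall fun _ h => absurd hj h
    have hlow : (F + ε • P) j = 0 → 0 ≤ P j := fun h0 => by
      by_contra! hP
      exact (hns j hj).2 hP h0
    have hup : c j - (F + ε • P) j = 0 → 0 ≤ -P j := fun hc => by
      by_contra! hP
      exact (hns j hj).1 (neg_lt_zero.1 hP) (sub_eq_zero.1 hc).symm
    filter_upwards [eventually_nonneg_add_mul (hG j hj).1 hlow,
      eventually_nonneg_add_mul (sub_nonneg.2 (hG j hj).2) hup] with t h1 h2 _
    exact ⟨h1, h2⟩
  obtain ⟨t, ht, ht0⟩ := ((eventually_all.2 hev).and self_mem_nhdsWithin).exists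
  refine hmax (ε + t) (lt_add_of_pos_right ε ht0) fun j hj => ?_
  obtain ⟨h1, h2⟩ := ht j hj
  simp only [Pi.add_apply, Pi.smul_apply, smul_eq_mul] at h1 h2 ⊢
  constructor <;> linarith

lemma add_mul_mem_Icc_of_conforms {c F P Q u ε δ t : ℝ} (hF : 0 ≤ F ∧ F ≤ c)
    (hG : 0 ≤ F + ε * P ∧ F + ε * P ≤ c)
    (hGQ : 0 ≤ F + ε * P + δ * Q ∧ F + ε * P + δ * Q ≤ c)
    (hP : P ∈ ({-1, 0, 1} : Set ℝ)) (hQ : Q ∈ ({-1, 0, 1} : Set ℝ))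
    (hu : u ∈ ({-1, 0, 1} : Set ℝ)) (huPQ : u ≠ 0 → 0 < u * (P + Q))
    (ht : 0 < t) (htε : t ≤ ε) (htδ : t ≤ δ) : 0 ≤ F + t * u ∧ F + t * u ≤ c := by
  rcases hu with rfl | rfl | rfl <;> rcases hP with rfl | rfl | rfl <;>
    rcases hQ with rfl | rfl | rfl <;> norm_num at huPQ <;>
    exact ⟨by linarith [hF.1, hG.1, hGQ.1], by linarith [hF.2, hG.2, hGQ.2]⟩

lemma augmenting_of_conforms {V : Submodule ℝ (Fin n → ℝ)} {c : Fin n → ℝ} {r : Fin n}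
    {F P Q p : Fin n → ℝ} {ε δ : ℝ} (hF : Feasible c r F) (hε : 0 < ε)
    (hG : Feasible c r (F + ε • P)) (hδ : 0 < δ) (hGQ : Feasible c r (F + ε • P + δ • Q))
    (hP : ∀ j, P j ∈ ({-1, 0, 1} : Set ℝ)) (hQ : ∀ j, Q j ∈ ({-1, 0, 1} : Set ℝ))
    (hp : IsRPath V r p) (hpPQ : Conforms p (P + Q)) : Augmenting V c r F p :=
  ⟨hp, min ε δ, lt_min hε hδ, fun j hj =>
    add_mul_mem_Icc_of_conforms (hF j hj) (hG j hj) (hGQ j hj) (hP j) (hQ j) (hp.1.2 j) (hpPQ j)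
      (lt_min hε hδ) (min_le_left ε δ) (min_le_right ε δ)⟩

section ShortestAug

variable {V : Submodule ℝ (Fin n → ℝ)} {c : Fin n → ℝ} {r : Fin n}
  {F P G Q : Fin n → ℝ}

lemma ShortestAug.exists_meetJoinDecomp (hV : IsRegularSpace V) (hF : Feasible c r F)
    (hP : ShortestAug V c r F P) (hG : MaxAug c r F P G) (hQ : Augmenting V c r G Q) :
    ∃ M J, MeetJoinDecomp V r P Q M J ∧ Augmenting V c r F M ∧ Augmenting V c r F J := by
  obtain ⟨ε, hε, rfl, hGf, -⟩ := hG
  obtain ⟨hQr, δ, hδ, hGQ⟩ := hQ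
  obtain ⟨M, J, hMJ⟩ := hV.exists_meetJoinDecomp hP.1.1 hQr
  have haug := fun p =>
    augmenting_of_conforms (V := V) (p := p) hF hε hGf hδ hGQ hP.1.1.1.2 hQr.1.2
  obtain ⟨k, p, a, b, hp, hconf, -, -, rfl, rfl, har, hbr, -⟩ := id hMJ
  exact ⟨p a, p b, hMJ, haug _ ⟨hp a, har⟩ (hconf a), haug _ ⟨hp b, hbr⟩ (hconf b)⟩

lemma ShortestAug.onorm_le (hV : IsRegularSpace V) (hF : Feasible c r F)
    (hP : ShortestAug V c r F P) (hG : MaxAug c r F P G) (hQ : Augmenting V c r G Q) :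
    onorm P ≤ onorm Q := by
  obtain ⟨M, J, hMJ, hM, hJ⟩ := hP.exists_meetJoinDecomp hV hF hG hQ
  linarith [hMJ.onorm_add_le_onorm_add, hP.2 M hM, hP.2 J hJ]

lemma ShortestAug.exists_of_onorm_eq (hV : IsRegularSpace V) (hF : Feasible c r F)
    (hP : ShortestAug V c r F P) (hG : MaxAug c r F P G) (hQ : Augmenting V c r G Q)
    (hQP : onorm Q = onorm P) :
    ∃ M J, Augmenting V c r F M ∧ Augmenting V c r F J ∧ onorm M = onorm P ∧
      onorm J = onorm P ∧ M + J = P + Q ∧ onorm (P + Q) = onorm P + onorm Q := by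
  obtain ⟨M, J, hMJ, hM, hJ⟩ := hP.exists_meetJoinDecomp hV hF hG hQ
  have := hMJ.onorm_add_le_onorm_add
  have := hP.2 M hM
  have := hP.2 J hJ
  obtain ⟨hsum, hnorm⟩ := hMJ.add_eq (by linarith)
  exact ⟨M, J, hM, hJ, by linarith, by linarith, hsum, hnorm⟩

/-- A path `Q` of the same length adds to `P` without cancellation, so it could only push the
saturated coordinate `j` further in the direction of `P`. -/
lemma ShortestAug.coord_eq_zero_of_saturated (hV : IsRegularSpace V) (hF : Feasible c r F)
    (hP : ShortestAug V c r F P) (hG : MaxAug c r F P G) {j : Fin n} (hsat : Saturates c r P G j)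
    (hQ : Augmenting V c r G Q) (hQP : onorm Q = onorm P) : Q j = 0 := by
  obtain ⟨-, -, -, -, -, -, -, hnorm⟩ := hP.exists_of_onorm_eq hV hF hG hQ hQP
  obtain ⟨hj, hsat⟩ := hsat
  obtain ⟨-, δ, hδ, hGQ⟩ := hQ
  have hfeas := hGQ j hj
  simp only [Pi.add_apply, Pi.smul_apply, smul_eq_mul] at hfeas
  rcases hsat with ⟨hPj, hGj⟩ | ⟨hPj, hGj⟩ <;>
    rcases (abs_add_eq_add_abs_iff _ _).1 (abs_add_eq_of_onorm_add_eq hnorm j) with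
      ⟨h1, h2⟩ | ⟨h1, h2⟩ <;> nlinarith

lemma ShortestAug.coord_eq_zero_of_forall (hV : IsRegularSpace V) (hF : Feasible c r F)
    (hP : ShortestAug V c r F P) (hG : MaxAug c r F P G) {j : Fin n}
    (hZ : ∀ Q', Augmenting V c r F Q' → onorm Q' = onorm P → Q' j = 0)
    (hQ : Augmenting V c r G Q) (hQP : onorm Q = onorm P) : Q j = 0 := by
  obtain ⟨M, J, hM, hJ, hMP, hJP, hMJ, -⟩ := hP.exists_of_onorm_eq hV hF hG hQ hQP
  have := congrFun hMJ j
  simp only [Pi.add_apply, hZ M hM hMP, hZ J hJ hJP, hZ P hP.1 rfl] at this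
  linarith

end ShortestAug

def ShortestAugRun (V : Submodule ℝ (Fin n → ℝ)) (c : Fin n → ℝ) (r : Fin n) (N : ℕ)
    (f P : ℕ → Fin n → ℝ) : Prop :=
  ∀ i < N, Feasible c r (f i) ∧ ShortestAug V c r (f i) (P i) ∧
    MaxAug c r (f i) (P i) (f (i + 1))

namespace ShortestAugRun

variable {V : Submodule ℝ (Fin n → ℝ)} {c : Fin n → ℝ} {r : Fin n} {N : ℕ}
  {f P : ℕ → Fin n → ℝ}

lemma onorm_le_of_le (hV : IsRegularSpace V) (h : ShortestAugRun V c r N f P) {i k : ℕ}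
    (hik : i ≤ k) (hk : k < N) : onorm (P i) ≤ onorm (P k) := by
  induction k, hik using Nat.le_induction with
  | base => exact le_rfl
  | succ k hik ih =>
    obtain ⟨hFk, hPk, hGk⟩ := h k (by omega)
    exact (ih (by omega)).trans (hPk.onorm_le hV hFk hGk (h (k + 1) hk).2.1.1)

/-- Induction over the phase: a path `Q` of the phase length at step `m + 1` satisfies
`P m + Q = M + J` with `M`, `J` augmenting paths of the same length at step `m`. -/
lemma coord_eq_zero_of_onorm_eq (hV : IsRegularSpace V) (h : ShortestAugRun V c r N f P)
    {t u : ℕ} (htu : t < u) (hu : u < N) (heq : onorm (P t) = onorm (P u)) {j : Fin n}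
    (hsat : Saturates c r (P t) (f (t + 1)) j) : P u j = 0 := by
  have hZ : ∀ m, t + 1 ≤ m → m ≤ u →
      ∀ Q, Augmenting V c r (f m) Q → onorm Q = onorm (P t) → Q j = 0 := by
    intro m htm
    induction m, htm using Nat.le_induction with
    | base =>
      intro _ Q hQ hQP
      obtain ⟨hFt, hPt, hGt⟩ := h t (by omega)
      exact hPt.coord_eq_zero_of_saturated hV hFt hGt hsat hQ hQP
    | succ m htm ih =>
      intro hmu Q hQ hQP
      obtain ⟨hFm, hPm, hGm⟩ := h m (by omega)
      have hm : onorm (P m) = onorm (P t) :=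
        le_antisymm (heq ▸ h.onorm_le_of_le hV (by omega) hu)
          (h.onorm_le_of_le hV (by omega) (by omega))
      exact hPm.coord_eq_zero_of_forall hV hFm hGm
        (fun Q' hQ' hQ'P => ih (by omega) Q' hQ' (hQ'P.trans hm)) hQ (hQP.trans hm.symm)
  exact hZ u htu le_rfl (P u) (h u hu).2.1.1 heq.symm

lemma ne_of_saturates (hV : IsRegularSpace V) (h : ShortestAugRun V c r N f P) {t u : ℕ}
    (htu : t < u) (hu : u < N) (heq : onorm (P t) = onorm (P u)) {j j' : Fin n}
    (hj : Saturates c r (P t) (f (t + 1)) j) (hj' : Saturates c r (P u) (f (u + 1)) j') :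
    j ≠ j' := by
  rintro rfl
  exact hj'.ne_zero (h.coord_eq_zero_of_onorm_eq hV htu hu heq hj)

lemma le_sq (hV : IsRegularSpace V) (h : ShortestAugRun V c r N f P) : N ≤ n ^ 2 := by
  classical
  have : Nonempty (Fin n) := ⟨r⟩
  choose! sat hsat using fun i hi => (h i hi).2.2.exists_saturates
  let len (i : ℕ) : ℕ := #{j | P i j ≠ 0}
  have hlen : ∀ i < N, onorm (P i) = len i := fun i hi => onorm_eq_card (h i hi).2.1.1.1.1.2
  have hmaps : ∀ i ∈ range N, (len i, sat i) ∈ Icc 1 n ×ˢ univ := by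
    intro i hi
    have hi : i < N := mem_range.1 hi
    refine mem_product.2 ⟨mem_Icc.2 ⟨(card_pos.2 ⟨r, ?_⟩ : 0 < len i), ?_⟩, mem_univ _⟩
    · simp [(h i hi).2.1.1.1.2]
    · simpa using card_filter_le univ fun j => P i j ≠ 0
  have hinj : Set.InjOn (fun i => (len i, sat i)) (range N) := by
    intro t ht u hu htu
    simp only [coe_range, Set.mem_Iio, Prod.mk.injEq] at ht hu htu
    have hl : onorm (P t) = onorm (P u) := by rw [hlen t ht, hlen u hu, htu.1]
    by_contra hne
    rcases lt_or_gt_of_ne hne with htu' | htu'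
    · exact h.ne_of_saturates hV htu' hu hl (hsat t ht) (hsat u hu) htu.2
    · exact h.ne_of_saturates hV htu' ht hl.symm (hsat u hu) (hsat t ht) htu.2.symm
  calc N = #(range N) := (card_range N).symm
    _ ≤ #(Icc 1 n ×ˢ (univ : Finset (Fin n))) :=
      card_le_card_of_injOn _ (fun i hi => hmaps i hi) hinj
    _ = n ^ 2 := by simp [sq]

end ShortestAugRun

theorem stmt14 (V : Submodule ℝ (Fin n → ℝ)) (hV : IsRegularSpace V)
    (r : Fin n) (c : Fin n → ℝ) (hc : ∀ j, j ≠ r → 0 ≤ c j)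
    (N : ℕ) (f : ℕ → Fin n → ℝ) (h0 : f 0 = 0)
    (hstep : ∀ i < N, ∃ P, ShortestAug V c r (f i) P ∧ MaxAug c r (f i) P (f (i + 1))) :
    N ≤ n ^ 2 := by
  choose! P hP using hstep
  refine ShortestAugRun.le_sq (P := P) hV fun i hi => ⟨?_, hP i hi⟩
  cases i with
  | zero => exact h0 ▸ fun j hj => ⟨le_rfl, hc j hj⟩
  | succ i => exact (hP i (by omega)).2.feasible
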